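/- Let b, c : ℕ → ℝ and write c′ for the extension of c to ℤ vanishing on negative integers. Let n ≥ 1 and m : Fin n → ℕ with m i ≥ 1 for all i. For a finpartition p of the full finset of Fin n and a part q of p, let δ_q := 1 if m is constant on q and 0 otherwise, and v_q the value of m at the minimal element of q. Set S(m) := ∑_p c′(n − ∑_{q ∈ p.parts} v_q) · ∏_{q ∈ p.parts} δ_q · (b v_q) · Nat.descFactorial v_q (q.card), the sum over all finpartitions p of the full finset of Fin n. For v ≥ 1 let k_v := card {i : Fin n | m i = v}. Then: if v divides k_v for every value v in the range of m, then S(m) = (c 0) · ∏_{v ∈ range of m} (b v)^(k_v / v) · (k_v)! / (k_v / v)!; otherwise S(m) = 0. -/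

import Mathlib

/-!
A summand of `partSum` survives only if every part `q` is a block on which `m` is constant:
`δ_q ≠ 0` forces constancy, `descFactorial v_q |q| ≠ 0` forces `|q| ≤ v_q`, and
`c′(n − ∑ v_q) ≠ 0` forces `∑ v_q ≤ n = ∑ |q|`, so `|q| = v_q` for every part and the summand is
`c 0 · ∏_q b(|q|) |q|!`. The remaining sum over partitions into such blocks is computed by
splitting off the block through a point `a`: it is a `v`-subset of the level set of `v = m a`
containing `a`, which gives `g(k) = C(k-1, v-1) · b v · v! · g(k - v)` for the contribution `g(k)`
of a level set of size `k`, solved by `g(k) = b v ^ (k/v) k! / (k/v)!` when `v ∣ k` and `0`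
otherwise.
-/

open Finset

/-- The partition sum `S(m)`: for a finpartition `p` of `Fin n`, each part `q` contributes
`δ_q · b(v_q) · descFactorial v_q |q|`, where `v_q` is the value of `m` at the minimal element
of `q` and `δ_q` is `1` iff `m` is constant on `q`; the whole is weighted by
`c′(n − ∑_q v_q)`. -/
noncomputable def partSum (b : ℕ → ℝ) (c' : ℤ → ℝ) (n : ℕ) (m : Fin n → ℕ) : ℝ :=
  ∑ p : Finpartition (Finset.univ : Finset (Fin n)),
    c' ((n : ℤ) - ∑ q ∈ p.parts.attach,
          (m ((q : Finset (Fin n)).min' (p.nonempty_of_mem_parts q.2)) : ℤ)) *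
      ∏ q ∈ p.parts.attach,
        (if ∀ i ∈ (q : Finset (Fin n)), ∀ j ∈ (q : Finset (Fin n)), m i = m j
            then (1 : ℝ) else 0) *
          b (m ((q : Finset (Fin n)).min' (p.nonempty_of_mem_parts q.2))) *
          (Nat.descFactorial (m ((q : Finset (Fin n)).min' (p.nonempty_of_mem_parts q.2)))
            (q : Finset (Fin n)).card : ℝ)


open Nat

variable {α : Type*} [DecidableEq α]

namespace Finpartition

lemma parts_avoid_of_mem [GeneralizedBooleanAlgebra α] {a b : α} (P : Finpartition a)
    (hb : b ∈ P.parts) : (P.avoid b).parts = P.parts.erase b := by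
  ext c
  rw [mem_avoid, mem_erase]
  constructor
  · rintro ⟨d, hd, hdb, rfl⟩
    have hne : d ≠ b := by rintro rfl; exact hdb le_rfl
    have hdisj : Disjoint d b := P.disjoint hd hb hne
    rw [hdisj.sdiff_eq_left]
    exact ⟨hne, hd⟩
  · rintro ⟨hne, hc⟩
    have hdisj : Disjoint c b := P.disjoint hc hb hne
    exact ⟨c, hc, fun hle => P.ne_bot hc (hdisj.eq_bot_of_le hle), hdisj.sdiff_eq_left⟩

lemma sum_prod_parts_eq_sum_mem {R : Type*} [CommSemiring R] (w : Finset α → R) {s : Finset α}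
    {a : α} (ha : a ∈ s) :
    ∑ P : Finpartition s, ∏ q ∈ P.parts, w q =
      ∑ t ∈ s.powerset with a ∈ t, w t * ∑ Q : Finpartition (s \ t), ∏ q ∈ Q.parts, w q := by
  rw [← sum_fiberwise_of_maps_to (g := fun P : Finpartition s => P.part a)
    (t := {t ∈ s.powerset | a ∈ t}) fun P _ => mem_filter.2
      ⟨mem_powerset.2 (P.le (P.part_mem.2 ha)), P.mem_part ha⟩]
  refine sum_congr rfl fun t ht => ?_
  obtain ⟨hts, hat⟩ := mem_filter.1 ht
  have htne : t ≠ ⊥ := ne_empty_of_mem hat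
  have ht_extend (Q : Finpartition (s \ t)) :
      t ∈ (Q.extend htne sdiff_disjoint (sdiff_sup_cancel (mem_powerset.1 hts))).parts := by
    rw [extend_parts]; exact mem_insert_self _ _
  have ht_parts {P : Finpartition s} (hP : P ∈ ({P | P.part a = t} : Finset (Finpartition s))) :
      t ∈ P.parts := by
    rw [← (mem_filter.1 hP).2]; exact P.part_mem.2 ha
  rw [mul_sum]
  refine sum_bij' (fun P _ => P.avoid t)
    (fun Q _ => Q.extend htne sdiff_disjoint (sdiff_sup_cancel (mem_powerset.1 hts)))
    (fun _ _ => mem_univ _)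
    (fun Q _ => mem_filter.2 ⟨mem_univ _, part_eq_of_mem _ (ht_extend Q) hat⟩)
    (fun P hP => ?_) (fun Q _ => ?_) (fun P hP => ?_)
  · ext1
    rw [extend_parts, parts_avoid_of_mem P (ht_parts hP), insert_erase (ht_parts hP)]
  · have htQ : t ∉ Q.parts := fun h => (mem_sdiff.1 (Q.le h hat)).2 hat
    ext1
    rw [parts_avoid_of_mem _ (ht_extend Q), extend_parts, erase_insert htQ]
  · rw [parts_avoid_of_mem P (ht_parts hP), mul_prod_erase P.parts w (ht_parts hP)]

end Finpartition

lemma prod_image_sdiff_of_subset_fiber {β M : Type*} [DecidableEq β] [CommMonoid M] (m : α → β)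
    (F : β → ℕ → M) (hF : ∀ w, F w 0 = 1) {s t : Finset α} {v : β} (hv : v ∈ s.image m)
    (ht : t ⊆ {i ∈ s | m i = v}) :
    ∏ w ∈ (s \ t).image m, F w #{i ∈ s \ t | m i = w} =
      F v (#{i ∈ s | m i = v} - #t) * ∏ w ∈ (s.image m).erase v, F w #{i ∈ s | m i = w} := by
  rw [prod_subset (image_subset_image sdiff_subset) fun w _ hw => by
    rw [filter_eq_empty_iff.2 fun i hi (hiw : m i = w) => hw (hiw ▸ mem_image_of_mem m hi),
      card_empty, hF], ← mul_prod_erase _ _ hv]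
  congr 1
  · rw [← card_sdiff_of_subset ht]
    congr 2
    ext i
    simp only [mem_filter, mem_sdiff]
    tauto
  · refine prod_congr rfl fun w hw => ?_
    congr 2
    ext i
    simp only [mem_filter, mem_sdiff, and_congr_left_iff, and_iff_left_iff_imp]
    rintro hiw - hit
    exact (mem_erase.1 hw).1 (hiw ▸ (mem_filter.1 (ht hit)).2)

/-- The sum, over the `k! / ((k/v)! (v!)^(k/v))` partitions of a `k`-set into blocks of size `v`,
of the weight `(b v * v!)^(k/v)`. -/
noncomputable def equipartitionSum (b : ℕ → ℝ) (v k : ℕ) : ℝ :=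
  if v ∣ k then b v ^ (k / v) * k ! / (k / v)! else 0

lemma choose_mul_equipartitionSum (b : ℕ → ℝ) {v k : ℕ} (hv : 1 ≤ v) (hk : 1 ≤ k) :
    ((k - 1).choose (v - 1) : ℝ) * (b v * v !) * equipartitionSum b v (k - v) =
      equipartitionSum b v k := by
  by_cases hvk : v ∣ k
  · obtain ⟨e, rfl⟩ : ∃ e, k = v * (e + 1) := by
      obtain ⟨e', rfl⟩ := hvk
      exact ⟨e' - 1, by rw [Nat.sub_add_cancel (Nat.pos_of_mul_pos_left hk)]⟩
    have hsub : v * (e + 1) - v = v * e := by rw [Nat.mul_succ, Nat.add_sub_cancel]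
    have hvle : v ≤ v * (e + 1) := Nat.le_mul_of_pos_right _ e.succ_pos
    have hcount :
        (v * (e + 1) - 1).choose (v - 1) * v ! * (v * e)! * (e + 1) = (v * (e + 1))! := by
      have h := choose_mul_factorial_mul_factorial (n := v * (e + 1) - 1) (k := v - 1) (by omega)
      rw [show v * (e + 1) - 1 - (v - 1) = v * e by omega] at h
      rw [← mul_factorial_pred (n := v) (by omega),
        ← mul_factorial_pred (n := v * (e + 1)) (by omega), ← h]
      ring
    rw [equipartitionSum, equipartitionSum, if_pos (Dvd.intro _ rfl), hsub,
      if_pos (Dvd.intro _ rfl), Nat.mul_div_cancel_left _ hv, Nat.mul_div_cancel_left _ hv, factorial_succ, ← hcount]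
    push_cast
    field_simp
    ring
  · have hrest : equipartitionSum b v (k - v) = 0 ∨ ((k - 1).choose (v - 1) : ℝ) = 0 := by
      rcases lt_or_ge v k with hlt | hle
      · left
        rw [equipartitionSum, if_neg (by rw [Nat.dvd_sub_self_right]; omega)]
      · right
        have hne : k ≠ v := by rintro rfl; exact hvk dvd_rfl
        exact_mod_cast Nat.choose_eq_zero_of_lt (by omega)
    rw [show equipartitionSum b v k = 0 from if_neg hvk]
    rcases hrest with h | h <;> simp [h]

lemma card_mul_equipartitionSum (b : ℕ → ℝ) {t : Finset α} {a : α} (ha : a ∈ t) (v : ℕ) :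
    (#{u ∈ t.powersetCard v | a ∈ u} : ℝ) * (b v * v !) * equipartitionSum b v (#t - v) =
      equipartitionSum b v #t := by
  have ht : 0 < #t := card_pos.2 ⟨a, ha⟩
  rcases Nat.eq_zero_or_pos v with rfl | hv
  · simp [equipartitionSum, ht.ne']
  · have hcount := card_filter_powersetCard_subset {a} t v (by simpa) (by simpa)
    simp only [singleton_subset_iff, card_singleton] at hcount
    rw [hcount]
    exact choose_mul_equipartitionSum b hv ht

noncomputable def blockWeight (b : ℕ → ℝ) (m : α → ℕ) (q : Finset α) : ℝ :=
  if ∀ i ∈ q, m i = #q then b #q * (#q)! else 0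

theorem sum_prod_blockWeight (b : ℕ → ℝ) (m : α → ℕ) (s : Finset α) :
    ∑ P : Finpartition s, ∏ q ∈ P.parts, blockWeight b m q =
      ∏ v ∈ s.image m, equipartitionSum b v #{i ∈ s | m i = v} := by
  induction s using Finset.strongInduction with | H s ih =>
  rcases s.eq_empty_or_nonempty with rfl | ⟨a, ha⟩
  · change ∑ P : Finpartition (⊥ : Finset α), _ = _
    rw [Fintype.sum_unique, Finpartition.parts_eq_empty_iff.2 rfl, prod_empty, image_empty,
      prod_empty]
  set v := m a
  set fib := {i ∈ s | m i = v}
  have ha_fib : a ∈ fib := mem_filter.2 ⟨ha, rfl⟩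
  have hv : v ∈ s.image m := mem_image_of_mem m ha
  set A := {t ∈ fib.powersetCard v | a ∈ t}
  have hA : A ⊆ {t ∈ s.powerset | a ∈ t} := fun t ht => by
    simp only [A, mem_filter, mem_powersetCard, mem_powerset] at ht ⊢
    exact ⟨ht.1.1.trans (filter_subset _ _), ht.2⟩
  have hvanish : ∀ t ∈ {t ∈ s.powerset | a ∈ t}, t ∉ A →
      blockWeight b m t * ∑ Q : Finpartition (s \ t), ∏ q ∈ Q.parts, blockWeight b m q = 0 := by
    intro t ht htA
    obtain ⟨hts, hat⟩ := mem_filter.1 ht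
    rw [blockWeight, if_neg, zero_mul]
    intro hconst
    refine htA (mem_filter.2 ⟨mem_powersetCard.2 ⟨fun i hi => ?_, (hconst a hat).symm⟩, hat⟩)
    exact mem_filter.2 ⟨mem_powerset.1 hts hi, (hconst i hi).trans (hconst a hat).symm⟩
  have hterm : ∀ t ∈ A,
      blockWeight b m t * ∑ Q : Finpartition (s \ t), ∏ q ∈ Q.parts, blockWeight b m q =
        b v * v ! * (equipartitionSum b v (#fib - v) *
          ∏ w ∈ (s.image m).erase v, equipartitionSum b w #{i ∈ s | m i = w}) := by
    intro t ht
    obtain ⟨⟨ht_fib, htv⟩, hat⟩ := mem_filter.1 ht |>.imp_left mem_powersetCard.1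
    have hts : t ⊆ s := ht_fib.trans (filter_subset _ _)
    rw [blockWeight, if_pos fun i hi => (mem_filter.1 (ht_fib hi)).2.trans htv.symm, htv,
      ih _ (sdiff_ssubset hts ⟨a, hat⟩),
      prod_image_sdiff_of_subset_fiber m _ (fun w => by simp [equipartitionSum]) hv ht_fib, htv]
  rw [Finpartition.sum_prod_parts_eq_sum_mem _ ha, ← sum_subset hA hvanish, sum_congr rfl hterm,
    sum_const, nsmul_eq_mul, ← mul_prod_erase _ _ hv, ← card_mul_equipartitionSum b ha_fib v]
  ring

section partSum

variable (b : ℕ → ℝ) (c : ℕ → ℝ) (c' : ℤ → ℝ) (m : α → ℕ) {s : Finset α} (P : Finpartition s)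
  (v : P.parts → ℕ)

lemma forall_eq_card_of_summand_ne_zero (hc'neg : ∀ j : ℤ, j < 0 → c' j = 0)
    (hv : ∀ q, ∃ i ∈ q.1, m i = v q)
    (h : c' (#s - ∑ q ∈ P.parts.attach, (v q : ℤ)) *
      ∏ q ∈ P.parts.attach, (if ∀ i ∈ q.1, ∀ j ∈ q.1, m i = m j then (1 : ℝ) else 0) *
        b (v q) * (descFactorial (v q) #q.1 : ℝ) ≠ 0) :
    ∀ q : P.parts, ∀ i ∈ q.1, m i = #q.1 := by
  obtain ⟨hc, hprod⟩ := mul_ne_zero_iff.1 h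
  have hfactor (q : P.parts) : (∀ i ∈ q.1, ∀ j ∈ q.1, m i = m j) ∧ #q.1 ≤ v q := by
    have hq := prod_ne_zero_iff.1 hprod q (mem_attach _ _)
    exact ⟨by_contra fun h => hq (by simp [h]),
      not_lt.1 fun h => hq (by simp [descFactorial_eq_zero_iff_lt.2 h])⟩
  have hle : ∑ q ∈ P.parts.attach, v q ≤ ∑ q ∈ P.parts.attach, #q.1 := by
    rw [sum_attach P.parts card, P.sum_card_parts]
    by_contra hlt
    exact hc (hc'neg _ (by rw [← Nat.cast_sum]; omega))
  have heq := (sum_eq_sum_iff_of_le fun q _ => (hfactor q).2).1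
    (le_antisymm (sum_le_sum fun q _ => (hfactor q).2) hle)
  intro q i hi
  obtain ⟨j, hj, hjv⟩ := hv q
  rw [(hfactor q).1 i hi j hj, hjv, heq q (mem_attach _ _)]

lemma partSum_summand_eq (hc'nat : ∀ j : ℕ, c' j = c j) (hc'neg : ∀ j : ℤ, j < 0 → c' j = 0)
    (hv : ∀ q, ∃ i ∈ q.1, m i = v q) :
    c' (#s - ∑ q ∈ P.parts.attach, (v q : ℤ)) *
      ∏ q ∈ P.parts.attach, (if ∀ i ∈ q.1, ∀ j ∈ q.1, m i = m j then (1 : ℝ) else 0) *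
        b (v q) * (descFactorial (v q) #q.1 : ℝ) =
      c 0 * ∏ q ∈ P.parts, blockWeight b m q := by
  by_cases hgood : ∀ q : P.parts, ∀ i ∈ q.1, m i = #q.1
  · have hvq (q : P.parts) : v q = #q.1 := by
      obtain ⟨i, hi, hiv⟩ := hv q
      rw [← hiv, hgood q i hi]
    have hsum : ∑ q ∈ P.parts.attach, (v q : ℤ) = #s := by
      simp_rw [hvq]
      exact_mod_cast (sum_attach P.parts card).trans P.sum_card_parts
    have hc0 : c' 0 = c 0 := by exact_mod_cast hc'nat 0
    rw [hsum, sub_self, hc0, ← prod_attach P.parts]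
    congr 1
    refine prod_congr rfl fun q _ => ?_
    rw [blockWeight, if_pos (hgood q),
      if_pos fun i hi j hj => (hgood q i hi).trans (hgood q j hj).symm, hvq, descFactorial_self,
      one_mul]
  · obtain ⟨q, hq⟩ := not_forall.1 hgood
    rw [prod_eq_zero q.2 (if_neg hq), mul_zero]
    by_contra h
    exact hgood (forall_eq_card_of_summand_ne_zero b c' m P v hc'neg hv h)

end partSum

lemma partSum_eq (b : ℕ → ℝ) (c : ℕ → ℝ) (c' : ℤ → ℝ) (hc'nat : ∀ j : ℕ, c' j = c j)
    (hc'neg : ∀ j : ℤ, j < 0 → c' j = 0) (n : ℕ) (m : Fin n → ℕ) :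
    partSum b c' n m =
      c 0 * ∑ P : Finpartition (univ : Finset (Fin n)), ∏ q ∈ P.parts, blockWeight b m q := by
  rw [partSum, mul_sum]
  refine sum_congr rfl fun P _ => ?_
  have := partSum_summand_eq b c c' m P (fun q => m (q.1.min' (P.nonempty_of_mem_parts q.2)))
    hc'nat hc'neg fun q => ⟨_, min'_mem _ _, rfl⟩
  rw [Finset.card_fin] at this
  -- the two sides decide the `if` in `partSum` by different instances
  convert this

theorem partSum_closed_form_general
    (b : ℕ → ℝ) (c : ℕ → ℝ)
    (c' : ℤ → ℝ) (hc'nat : ∀ j : ℕ, c' j = c j) (hc'neg : ∀ j : ℤ, j < 0 → c' j = 0)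
    (n : ℕ) (m : Fin n → ℕ) :
    ((∀ v ∈ Finset.univ.image m, v ∣ (Finset.univ.filter (fun i => m i = v)).card) →
      partSum b c' n m =
        c 0 * ∏ v ∈ Finset.univ.image m,
          (b v) ^ ((Finset.univ.filter (fun i => m i = v)).card / v) *
            (Nat.factorial ((Finset.univ.filter (fun i => m i = v)).card) : ℝ) /
            (Nat.factorial ((Finset.univ.filter (fun i => m i = v)).card / v) : ℝ)) ∧
    (¬ (∀ v ∈ Finset.univ.image m, v ∣ (Finset.univ.filter (fun i => m i = v)).card) →
      partSum b c' n m = 0) := by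
  rw [partSum_eq b c c' hc'nat hc'neg, sum_prod_blockWeight]
  refine ⟨fun hdvd => ?_, fun hndvd => ?_⟩
  · congr 1
    exact prod_congr rfl fun v hv => if_pos (hdvd v hv)
  · obtain ⟨v, hv, hv_ndvd⟩ := not_forall₂.1 hndvd
    exact mul_eq_zero_of_right _ (prod_eq_zero hv (if_neg hv_ndvd))

theorem partSum_closed_form
    (b : ℕ → ℝ) (c : ℕ → ℝ)
    (c' : ℤ → ℝ) (hc'nat : ∀ j : ℕ, c' j = c j) (hc'neg : ∀ j : ℤ, j < 0 → c' j = 0)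
    (n : ℕ) (hn : 1 ≤ n) (m : Fin n → ℕ) (hm : ∀ i, 1 ≤ m i) :
    ((∀ v ∈ Finset.univ.image m, v ∣ (Finset.univ.filter (fun i => m i = v)).card) →
      partSum b c' n m =
        c 0 * ∏ v ∈ Finset.univ.image m,
          (b v) ^ ((Finset.univ.filter (fun i => m i = v)).card / v) *
            (Nat.factorial ((Finset.univ.filter (fun i => m i = v)).card) : ℝ) /
            (Nat.factorial ((Finset.univ.filter (fun i => m i = v)).card / v) : ℝ)) ∧
    (¬ (∀ v ∈ Finset.univ.image m, v ∣ (Finset.univ.filter (fun i => m i = v)).card) →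
      partSum b c' n m = 0) :=
  partSum_closed_form_general b c c' hc'nat hc'neg n m
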